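/- Let H be an edge arithmetic n-quasicluster in which every edge contains at most one vertex of odd degree. Then χ(H) ≤ n. -/

import Mathlib

/-!
Every label set `F(u)` is symmetric under a reflection `x ↦ τ_u - x` of `ZMod n`: a single
`k`-progression is reversed by it, and two equal-length ones are swapped. A label fixed by the
reflection (`τ_u = 2x`) exists only for an odd-length single progression, i.e. only if `u` has odd
degree. Colour `u` by `τ_u`. If two vertices `u ≠ v` of an edge `e` had `τ_u = τ_v = τ`, then
`τ - φ e` would label an edge through both, which by linearity is `e` itself; so `τ = 2 φ e` and
both vertices would have odd degree.
-/

/-- `S ⊆ ZMod n` is a `k`-arithmetic progression of length `l`, enumerated (with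
distinct values) by `v 1, …, v l` with consecutive differences `k`. -/
def IsArithProg (n : ℕ) (k : ℕ) (v : ℕ → ZMod n) (l : ℕ)
    (S : Finset (ZMod n)) : Prop :=
  (∀ j, 1 ≤ j → j < l → v (j + 1) - v j = (k : ZMod n)) ∧
  (∀ j j', 1 ≤ j → j ≤ l → 1 ≤ j' → j' ≤ l → v j = v j' → j = j') ∧
  S = (Finset.Icc 1 l).image v

def IsReflectionCenter {G : Type*} [Sub G] (τ : G) (S : Finset G) : Prop :=
  ∀ x ∈ S, τ - x ∈ S

theorem IsReflectionCenter.eq_add_self_of_inter_subset {G : Type*} [AddGroup G] [DecidableEq G]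
    {τ x : G} {S T : Finset G} (hS : IsReflectionCenter τ S) (hT : IsReflectionCenter τ T)
    (hxS : x ∈ S) (hxT : x ∈ T) (hST : S ∩ T ⊆ {x}) : τ = x + x := by
  have h : τ - x = x := Finset.mem_singleton.mp (hST (Finset.mem_inter.mpr ⟨hS x hxS, hT x hxT⟩))
  rwa [sub_eq_iff_eq_add] at h

theorem add_rev_eq_of_const_step {G : Type*} [AddCommGroup G] {v w : ℕ → G} {d : G} {l : ℕ}
    (hv : ∀ j, 1 ≤ j → j < l → v (j + 1) - v j = d)
    (hw : ∀ j, 1 ≤ j → j < l → w (j + 1) - w j = d) {j : ℕ} (h1 : 1 ≤ j) (hl : j ≤ l) :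
    v j + w (l + 1 - j) = v 1 + w l := by
  induction j, h1 using Nat.le_induction with
  | base => simp
  | succ j h1 ih =>
    have hvj := sub_eq_iff_eq_add.mp (hv j h1 (by omega))
    have hwj := sub_eq_iff_eq_add.mp (hw (l - j) (by omega) (by omega))
    rw [← ih (by omega), show l + 1 - j = l - j + 1 by omega, show l + 1 - (j + 1) = l - j by omega,
      hvj, hwj]
    abel

namespace IsArithProg

variable {n k l : ℕ} {v w : ℕ → ZMod n} {A B S : Finset (ZMod n)}

theorem card_eq (h : IsArithProg n k v l S) : S.card = l := by
  rw [h.2.2, Finset.card_image_of_injOn, Nat.card_Icc, Nat.add_sub_cancel]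
  intro a ha b hb hab
  rw [Finset.coe_Icc, Set.mem_Icc] at ha hb
  exact h.2.1 a b ha.1 ha.2 hb.1 hb.2 hab

theorem mem_iff (h : IsArithProg n k v l S) {x : ZMod n} :
    x ∈ S ↔ ∃ j, 1 ≤ j ∧ j ≤ l ∧ v j = x := by
  simp only [h.2.2, Finset.mem_image, Finset.mem_Icc, and_assoc]

theorem isReflectionCenter_union (hA : IsArithProg n k v l A) (hB : IsArithProg n k w l B) :
    IsReflectionCenter (v 1 + w l) (A ∪ B) := by
  intro x hx
  rcases Finset.mem_union.mp hx with hx | hx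
  · obtain ⟨j, h1, hl, rfl⟩ := hA.mem_iff.mp hx
    refine Finset.mem_union_right _ (hB.mem_iff.mpr ⟨l + 1 - j, by omega, by omega, ?_⟩)
    linear_combination add_rev_eq_of_const_step hA.1 hB.1 h1 hl
  · obtain ⟨j, h1, hl, rfl⟩ := hB.mem_iff.mp hx
    refine Finset.mem_union_left _ (hA.mem_iff.mpr ⟨l + 1 - j, by omega, by omega, ?_⟩)
    have h := add_rev_eq_of_const_step hA.1 hB.1 (j := l + 1 - j) (by omega) (by omega)
    rw [show l + 1 - (l + 1 - j) = j by omega] at h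
    linear_combination h

theorem exists_eq_of_add_self_eq (hA : IsArithProg n k v l A) (hB : IsArithProg n k w l B)
    {x : ZMod n} (hx : x ∈ A ∪ B) (hτ : v 1 + w l = x + x) :
    ∃ j, 1 ≤ j ∧ j ≤ l ∧ v j = w (l + 1 - j) := by
  rcases Finset.mem_union.mp hx with hx | hx
  · obtain ⟨j, h1, hl, rfl⟩ := hA.mem_iff.mp hx
    refine ⟨j, h1, hl, ?_⟩
    linear_combination -hτ - add_rev_eq_of_const_step hA.1 hB.1 h1 hl
  · obtain ⟨j, h1, hl, rfl⟩ := hB.mem_iff.mp hx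
    refine ⟨l + 1 - j, by omega, by omega, ?_⟩
    have h := add_rev_eq_of_const_step hA.1 hB.1 (j := l + 1 - j) (by omega) (by omega)
    rw [show l + 1 - (l + 1 - j) = j by omega] at h ⊢
    linear_combination h + hτ

theorem exists_reflectionCenter
    (hS : (∃ l v, IsArithProg n k v l S) ∨
      (∃ l v w A B, IsArithProg n k v l A ∧ IsArithProg n k w l B ∧ Disjoint A B ∧ S = A ∪ B)) :
    ∃ τ, IsReflectionCenter τ S ∧ ∀ x ∈ S, τ = x + x → Odd S.card := by
  rcases hS with ⟨l, v, h⟩ | ⟨l, v, w, A, B, hA, hB, hAB, rfl⟩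
  · refine ⟨v 1 + v l, by simpa using h.isReflectionCenter_union h, fun x hx hτ => ?_⟩
    obtain ⟨j, h1, hl, hj⟩ := h.exists_eq_of_add_self_eq h (by simpa using hx) hτ
    have hmid : j = l + 1 - j := h.2.1 j (l + 1 - j) h1 hl (by omega) (by omega) hj
    exact h.card_eq ▸ ⟨j - 1, by omega⟩
  · refine ⟨v 1 + w l, hA.isReflectionCenter_union hB, fun x hx hτ => ?_⟩
    obtain ⟨j, h1, hl, hj⟩ := hA.exists_eq_of_add_self_eq hB hx hτ
    exact absurd (hB.mem_iff.mpr ⟨_, by omega, by omega, hj.symm⟩)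
      (Finset.disjoint_left.mp hAB (hA.mem_iff.mpr ⟨j, h1, hl, rfl⟩))

end IsArithProg

section LinearHypergraph

variable {α β : Type*} [DecidableEq α] {E : Finset (Finset α)} {e : Finset α} {u v : α}

theorem eq_of_mem_of_mem (hinter : ∀ e ∈ E, ∀ f ∈ E, e ≠ f → (e ∩ f).card = 1)
    (he : e ∈ E) (hu : u ∈ e) (hv : v ∈ e) (huv : u ≠ v)
    {f : Finset α} (hf : f ∈ E) (hfu : u ∈ f) (hfv : v ∈ f) : f = e := by
  by_contra hfe
  have hle : (f ∩ e).card ≤ 1 := (hinter f hf e he hfe).le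
  exact huv (Finset.card_le_one.mp hle u (Finset.mem_inter.mpr ⟨hfu, hu⟩)
    v (Finset.mem_inter.mpr ⟨hfv, hv⟩))

theorem image_filter_inter_subset [DecidableEq β]
    (hinter : ∀ e ∈ E, ∀ f ∈ E, e ≠ f → (e ∩ f).card = 1)
    {φ : Finset α → β} (hφinj : ∀ e ∈ E, ∀ f ∈ E, φ e = φ f → e = f)
    (he : e ∈ E) (hu : u ∈ e) (hv : v ∈ e) (huv : u ≠ v) :
    (E.filter (u ∈ ·)).image φ ∩ (E.filter (v ∈ ·)).image φ ⊆ {φ e} := by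
  intro x hx
  simp only [Finset.mem_inter, Finset.mem_image, Finset.mem_filter] at hx
  obtain ⟨⟨f, ⟨hf, hfu⟩, rfl⟩, ⟨g, ⟨hg, hgv⟩, hgf⟩⟩ := hx
  obtain rfl := hφinj g hg f hf hgf
  rw [eq_of_mem_of_mem hinter he hu hv huv hg hfu hgv, Finset.mem_singleton]

end LinearHypergraph

theorem stmt15_general {α : Type*} [DecidableEq α] (n : ℕ)
    (E : Finset (Finset α))
    (hinter : ∀ e ∈ E, ∀ f ∈ E, e ≠ f → (e ∩ f).card = 1)
    (φ : Finset α → ZMod n)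
    (hφinj : ∀ e ∈ E, ∀ f ∈ E, φ e = φ f → e = f)
    (harith : ∀ u : α, (∃ e ∈ E, u ∈ e) → ∃ k, 1 ≤ k ∧ k ≤ n / 2 ∧
      ((∃ l v, IsArithProg n k v l ((E.filter (fun e => u ∈ e)).image φ)) ∨
       (∃ l v w A B, IsArithProg n k v l A ∧ IsArithProg n k w l B ∧
          Disjoint A B ∧ (E.filter (fun e => u ∈ e)).image φ = A ∪ B)))
    (hoddunique : ∀ e ∈ E, ∀ u ∈ e, ∀ w ∈ e,
      Odd (E.filter (fun f => u ∈ f)).card →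
      Odd (E.filter (fun f => w ∈ f)).card → u = w) :
    ∃ c : α → ZMod n, ∀ e ∈ E, ∀ u ∈ e, ∀ v ∈ e, u ≠ v → c u ≠ c v := by
  have hcenter : ∀ u, ∃ τ, IsReflectionCenter τ ((E.filter (u ∈ ·)).image φ) ∧
      ∀ x ∈ (E.filter (u ∈ ·)).image φ, τ = x + x → Odd (E.filter (u ∈ ·)).card := by
    intro u
    by_cases hu : ∃ e ∈ E, u ∈ e
    · obtain ⟨k, -, -, hS⟩ := harith u hu
      rw [← Finset.card_image_of_injOn fun e he f hf => hφinj e (Finset.mem_filter.mp he).1 f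
        (Finset.mem_filter.mp hf).1]
      exact IsArithProg.exists_reflectionCenter hS
    · have : E.filter (u ∈ ·) = ∅ := Finset.filter_eq_empty_iff.mpr fun e he hue => hu ⟨e, he, hue⟩
      simp [this, IsReflectionCenter]
  choose τ hτ hτodd using hcenter
  refine ⟨τ, fun e he u hu v hv huv hτuv => huv ?_⟩
  have hmem : ∀ w ∈ e, φ e ∈ (E.filter (w ∈ ·)).image φ := fun w hw =>
    Finset.mem_image_of_mem φ (Finset.mem_filter.mpr ⟨he, hw⟩)
  have hτe : τ u = φ e + φ e := (hτ u).eq_add_self_of_inter_subset (hτuv ▸ hτ v)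
    (hmem u hu) (hmem v hv) (image_filter_inter_subset hinter hφinj he hu hv huv)
  exact hoddunique e he u hu v hv (hτodd u _ (hmem u hu) hτe) (hτodd v _ (hmem v hv) (hτuv ▸ hτe))

/-- Let `H` be an edge arithmetic `n`-quasicluster in which every edge contains
at most one vertex of odd degree. Then `χ(H) ≤ n`. -/
theorem stmt15 {α : Type*} [DecidableEq α] (n : ℕ) (hn : 2 ≤ n)
    (E : Finset (Finset α))
    (hcard : E.card = n)
    (hsize : ∀ e ∈ E, 2 ≤ e.card ∧ e.card ≤ n)
    (hinter : ∀ e ∈ E, ∀ f ∈ E, e ≠ f → (e ∩ f).card = 1)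
    (hdeg : ∀ u : α, (∃ e ∈ E, u ∈ e) →
      2 ≤ (E.filter (fun e => u ∈ e)).card)
    (φ : Finset α → ZMod n)
    (hφinj : ∀ e ∈ E, ∀ f ∈ E, φ e = φ f → e = f)
    (hφsurj : ∀ c : ZMod n, ∃ e ∈ E, φ e = c)
    (harith : ∀ u : α, (∃ e ∈ E, u ∈ e) → ∃ k, 1 ≤ k ∧ k ≤ n / 2 ∧
      ((∃ l v, IsArithProg n k v l ((E.filter (fun e => u ∈ e)).image φ)) ∨
       (∃ l v w A B, IsArithProg n k v l A ∧ IsArithProg n k w l B ∧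
          Disjoint A B ∧ (E.filter (fun e => u ∈ e)).image φ = A ∪ B)))
    (hoddunique : ∀ e ∈ E, ∀ u ∈ e, ∀ w ∈ e,
      Odd (E.filter (fun f => u ∈ f)).card →
      Odd (E.filter (fun f => w ∈ f)).card → u = w) :
    ∃ c : α → ZMod n, ∀ e ∈ E, ∀ u ∈ e, ∀ v ∈ e, u ≠ v → c u ≠ c v :=
  stmt15_general n E hinter φ hφinj harith hoddunique
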